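/- For real a ≥ 0 and b > 0, the integral over x from 0 to ∞ of √(√(x²+a²)+a)/(√(x²+a²)·(x²+b²)) equals π/(b·√(2(a+b))). -/

import Mathlib

open Real MeasureTheory

lemma cauchy_int (c : ℝ) (hc : 0 < c) : ∫ x : ℝ, (x^2 + c^2)⁻¹ = π / c := by
  have h1 : ∀ x : ℝ, (x^2 + c^2)⁻¹ = c⁻¹^2 * (1 + (c⁻¹ * x)^2)⁻¹ := by
    intro x
    have h2 : (1 + (c⁻¹ * x)^2) = (x^2+c^2) * c⁻¹^2 := by field_simp; ring
    have hc2 : (0:ℝ) < x^2 + c^2 := by positivity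
    rw [h2, mul_inv, ← mul_assoc, mul_comm (c⁻¹^2), mul_assoc,
      mul_inv_cancel₀ (by positivity), mul_one]
  simp_rw [h1]
  rw [integral_const_mul, MeasureTheory.Measure.integral_comp_mul_left (fun y => (1 + y^2)⁻¹) c⁻¹,
    integral_univ_inv_one_add_sq]
  rw [abs_of_pos (by positivity), inv_inv, smul_eq_mul]
  field_simp

lemma Dpos (a b : ℝ) (ha : 0 ≤ a) (hb : 0 < b) (u : ℝ) : 0 < u^4+2*a*u^2+b^2 := by positivity

lemma intD (a b : ℝ) (ha : 0 ≤ a) (hb : 0 < b) :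
    Integrable (fun u : ℝ => (u^4+2*a*u^2+b^2)⁻¹) := by
  have hcont : Continuous (fun u : ℝ => (u^4+2*a*u^2+b^2)⁻¹) := by
    apply Continuous.inv₀ (by continuity)
    intro u; exact (Dpos a b ha hb u).ne'
  apply (integrable_inv_one_add_sq.const_mul (2+2/b^2)).mono hcont.aestronglyMeasurable
  filter_upwards with u
  have hD := Dpos a b ha hb u
  have h1u : (0:ℝ) < 1+u^2 := by positivity
  rw [Real.norm_eq_abs, Real.norm_eq_abs, abs_of_pos (by positivity), abs_of_pos (by positivity)]
  rw [inv_le_iff_one_le_mul₀ hD,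
    show (2+2/b^2) * (1+u^2)⁻¹ * (u^4+2*a*u^2+b^2) = (2+2/b^2) * (u^4+2*a*u^2+b^2) / (1+u^2) by ring,
    le_div_iff₀ h1u]
  have hb2 : (0:ℝ) < b^2 := by positivity
  rw [← sub_nonneg,
    show (2+2/b^2)*(u^4+2*a*u^2+b^2) - 1*(1+u^2)
      = (2*(u^4+2*a*u^2+b^2)*b^2 + 2*(u^4+2*a*u^2+b^2) - (1+u^2)*b^2)/b^2 by field_simp]
  apply div_nonneg _ hb2.le
  nlinarith [sq_nonneg (b^2 - u^2), sq_nonneg u, sq_nonneg (u*b), mul_nonneg ha (sq_nonneg u),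
    mul_nonneg (mul_nonneg ha (sq_nonneg u)) hb2.le, sq_nonneg (u^2*b), sq_nonneg (u^2 - b)]

lemma intD2 (a b : ℝ) (ha : 0 ≤ a) (hb : 0 < b) :
    Integrable (fun u : ℝ => u^2 * (u^4+2*a*u^2+b^2)⁻¹) := by
  have hcont : Continuous (fun u : ℝ => u^2 * (u^4+2*a*u^2+b^2)⁻¹) := by
    apply Continuous.mul (by continuity)
    apply Continuous.inv₀ (by continuity)
    intro u; exact (Dpos a b ha hb u).ne'
  apply (integrable_inv_one_add_sq.const_mul (1+1/(2*b))).mono hcont.aestronglyMeasurable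
  filter_upwards with u
  have hD := Dpos a b ha hb u
  have h1u : (0:ℝ) < 1+u^2 := by positivity
  rw [Real.norm_eq_abs, Real.norm_eq_abs, abs_of_nonneg (by positivity), abs_of_pos (by positivity)]
  rw [mul_comm, ← div_eq_inv_mul, div_le_iff₀ hD,
    show (1+1/(2*b)) * (1+u^2)⁻¹ * (u^4+2*a*u^2+b^2) = (1+1/(2*b)) * (u^4+2*a*u^2+b^2) / (1+u^2) by ring,
    le_div_iff₀ h1u, ← sub_nonneg,
    show (1+1/(2*b)) * (u^4+2*a*u^2+b^2) - u^2*(1+u^2)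
      = ((2*b)*(u^4+2*a*u^2+b^2) + (u^4+2*a*u^2+b^2) - u^2*(1+u^2)*(2*b))/(2*b) by field_simp]
  apply div_nonneg _ (by positivity)
  nlinarith [sq_nonneg (u^2 - b), mul_nonneg ha (sq_nonneg u), sq_nonneg u,
    mul_nonneg (mul_nonneg ha (sq_nonneg u)) hb.le, mul_nonneg hb.le (sq_nonneg (u^2-b)),
    mul_nonneg (mul_nonneg (mul_nonneg hb.le ha) (sq_nonneg u)) (by norm_num : (0:ℝ) ≤ 4)]

lemma subJ (a b : ℝ) (ha : 0 ≤ a) (hb : 0 < b) :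
    ∫ v in Set.Ioi (0:ℝ), v^2 * (v^4+2*a*v^2+b^2)⁻¹
      = b * ∫ u in Set.Ioi (0:ℝ), (u^4+2*a*u^2+b^2)⁻¹ := by
  have himg : (fun u : ℝ => b / u) '' Set.Ioi 0 = Set.Ioi 0 := by
    ext v
    constructor
    · rintro ⟨u, hu, rfl⟩
      exact div_pos hb hu
    · intro hv
      exact ⟨b / v, div_pos hb hv, by field_simp⟩
  have hderiv : ∀ u ∈ Set.Ioi (0:ℝ),
      HasDerivWithinAt (fun u : ℝ => b / u) (-(b / u^2)) (Set.Ioi 0) u := by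
    intro u hu
    have := (hasDerivAt_inv (ne_of_gt hu)).const_mul b
    simp only [div_eq_mul_inv] at *
    rw [show -(b * (u ^ 2)⁻¹) = b * -(u ^ 2)⁻¹ by ring]
    exact this.hasDerivWithinAt
  have hinj : Set.InjOn (fun u : ℝ => b / u) (Set.Ioi 0) := by
    intro x hx y hy hxy
    simp only at hxy
    rw [div_eq_div_iff (ne_of_gt hx) (ne_of_gt hy)] at hxy
    exact mul_left_cancel₀ (ne_of_gt hb) hxy.symm
  have key := integral_image_eq_integral_abs_deriv_smul measurableSet_Ioi hderiv hinj
    (fun v => v^2 * (v^4+2*a*v^2+b^2)⁻¹)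
  rw [himg] at key
  rw [key, ← MeasureTheory.integral_const_mul]
  apply setIntegral_congr_fun measurableSet_Ioi
  intro u hu
  have hu0 : (0:ℝ) < u := hu
  have hD : (0:ℝ) < u^4+2*a*u^2+b^2 := by positivity
  simp only [smul_eq_mul]
  rw [ abs_neg, abs_of_pos (by positivity : (0:ℝ) < b/u^2)]
  have key2 : ((b/u)^4+2*a*(b/u)^2+b^2) = (u^4+2*a*u^2+b^2) * (b^2/u^4) := by
    field_simp; ring
  rw [key2, mul_inv]
  rw [inv_div, div_pow]
  field_simp

lemma subW (a b : ℝ) (ha : 0 ≤ a) (hb : 0 < b) :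
    ∫ u in Set.Ioi (0:ℝ), (u^2+b) * (u^4+2*a*u^2+b^2)⁻¹
      = π / Real.sqrt (2*(a+b)) := by
  set c := Real.sqrt (2*(a+b)) with hc
  have hcpos : 0 < c := Real.sqrt_pos.mpr (by positivity)
  have hc2 : c^2 = 2*(a+b) := Real.sq_sqrt (by positivity)
  have himg : (fun u : ℝ => u - b/u) '' Set.Ioi 0 = Set.univ := by
    apply Set.eq_univ_iff_forall.mpr
    intro w
    set r := Real.sqrt (w^2+4*b) with hr
    have hr2 : r^2 = w^2+4*b := Real.sq_sqrt (by positivity)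
    have hrn : 0 ≤ r := Real.sqrt_nonneg _
    have hu : (0:ℝ) < (w+r)/2 := by nlinarith [sq_nonneg (r+w)]
    refine ⟨(w+r)/2, hu, ?_⟩
    have hkey : ((w+r)/2)^2 - b = w * ((w+r)/2) := by nlinarith
    simp only
    have hd : b/((w+r)/2) = (w+r)/2 - w := by
      rw [div_eq_iff (ne_of_gt hu)]
      nlinarith [hkey]
    rw [hd]
    ring
  have hderiv : ∀ u ∈ Set.Ioi (0:ℝ),
      HasDerivWithinAt (fun u : ℝ => u - b/u) (1 + b/u^2) (Set.Ioi 0) u := by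
    intro u hu
    have h1 := (hasDerivAt_id u).sub ((hasDerivAt_inv (ne_of_gt hu)).const_mul b)
    simp only [div_eq_mul_inv]
    rw [show (1:ℝ) + b * (u ^ 2)⁻¹ = 1 - b * -(u ^ 2)⁻¹ by ring]
    exact h1.hasDerivWithinAt
  have hinj : Set.InjOn (fun u : ℝ => u - b/u) (Set.Ioi 0) := by
    intro x hx y hy hxy
    simp only at hxy
    have hx0 : (0:ℝ) < x := hx
    have hy0 : (0:ℝ) < y := hy
    have h2 : (x - y) * (x*y+b) = ((x - b/x) - (y - b/y)) * (x*y) := by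
      field_simp
      ring
    rw [hxy, sub_self, zero_mul] at h2
    rcases mul_eq_zero.mp h2 with h | h
    · linarith
    · nlinarith
  have key := integral_image_eq_integral_abs_deriv_smul measurableSet_Ioi hderiv hinj
    (fun w => (w^2 + c^2)⁻¹)
  rw [himg, Measure.restrict_univ] at key
  have hcint : ∫ x : ℝ, (x^2 + c^2)⁻¹ = π / c := cauchy_int c hcpos
  rw [← hcint, key]
  apply setIntegral_congr_fun measurableSet_Ioi
  intro u hu
  have hu0 : (0:ℝ) < u := hu
  have hD : (0:ℝ) < u^4+2*a*u^2+b^2 := by positivity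
  simp only [smul_eq_mul]
  rw [abs_of_pos (by positivity : (0:ℝ) < 1 + b/u^2)]
  have key2 : (u - b/u)^2 + c^2 = (u^4+2*a*u^2+b^2) * (1/u^2) := by
    rw [hc2]; field_simp; ring
  rw [key2, mul_inv, one_div, inv_inv]
  field_simp

lemma subPhi (a b : ℝ) (ha : 0 ≤ a) (hb : 0 < b) :
    ∫ x in Set.Ioi (0:ℝ),
        Real.sqrt (Real.sqrt (x^2 + a^2) + a) / (Real.sqrt (x^2 + a^2) * (x^2 + b^2))
      = ∫ u in Set.Ioi (0:ℝ), 2 * (u^4+2*a*u^2+b^2)⁻¹ := by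
  set φ : ℝ → ℝ := fun u => u * Real.sqrt (u^2+2*a) with hφ
  have himg : φ '' Set.Ioi 0 = Set.Ioi 0 := by
    ext y
    constructor
    · rintro ⟨u, hu, rfl⟩
      have hu0 : (0:ℝ) < u := hu
      exact mul_pos hu0 (Real.sqrt_pos.mpr (by positivity))
    · intro hy
      have hy0 : (0:ℝ) < y := hy
      set s := Real.sqrt (a^2+y^2) with hs
      have hs2 : s^2 = a^2+y^2 := Real.sq_sqrt (by positivity)
      have hsa : a < s := by
        calc a = Real.sqrt (a^2) := (Real.sqrt_sq ha).symm
        _ < s := Real.sqrt_lt_sqrt (sq_nonneg a) (by nlinarith)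
      set u := Real.sqrt (s - a) with hud
      have hu2 : u^2 = s - a := Real.sq_sqrt (by linarith)
      have hu0 : (0:ℝ) < u := Real.sqrt_pos.mpr (by linarith)
      refine ⟨u, hu0, ?_⟩
      have h1 : u^2 + 2*a = s + a := by rw [hu2]; ring
      have h2 : φ u = Real.sqrt ((s-a)*(s+a)) := by
        rw [hφ]
        simp only
        rw [h1, ← hu2, Real.sqrt_mul (by positivity) (s+a), Real.sqrt_sq hu0.le]
      rw [h2, show (s-a)*(s+a) = y^2 by nlinarith, Real.sqrt_sq hy0.le]
  have hderiv : ∀ u ∈ Set.Ioi (0:ℝ),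
      HasDerivWithinAt φ ((2*u^2+2*a) / Real.sqrt (u^2+2*a)) (Set.Ioi 0) u := by
    intro u hu
    have hu0 : (0:ℝ) < u := hu
    have hh : (0:ℝ) < u^2+2*a := by positivity
    have hsp : 0 < Real.sqrt (u^2+2*a) := Real.sqrt_pos.mpr hh
    have hg : HasDerivAt (fun u : ℝ => u^2+2*a) (2*u) u := by
      simpa using ((hasDerivAt_pow 2 u).add_const (2*a))
    have hsq : HasDerivAt (fun u : ℝ => Real.sqrt (u^2+2*a))
        (1 / (2 * Real.sqrt (u^2+2*a)) * (2*u)) u :=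
      (Real.hasDerivAt_sqrt (ne_of_gt hh)).comp u hg
    have hprod := (hasDerivAt_id u).mul hsq
    have heq : 1 * Real.sqrt (u^2+2*a) + id u * (1 / (2 * Real.sqrt (u^2+2*a)) * (2*u))
        = (2*u^2+2*a) / Real.sqrt (u^2+2*a) := by
      have hs2 : Real.sqrt (u^2+2*a) ^ 2 = u^2+2*a := Real.sq_sqrt hh.le
      rw [id]
      field_simp
      nlinarith [hs2]
    rw [heq] at hprod
    exact hprod.hasDerivWithinAt
  have hinj : Set.InjOn φ (Set.Ioi 0) := by
    intro x hx y hy hxy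
    have hx0 : (0:ℝ) < x := hx
    have hy0 : (0:ℝ) < y := hy
    have e1 : (φ x)^2 = x^2*(x^2+2*a) := by
      rw [hφ]; simp only; rw [mul_pow, Real.sq_sqrt (by positivity)]
    have e2 : (φ y)^2 = y^2*(y^2+2*a) := by
      rw [hφ]; simp only; rw [mul_pow, Real.sq_sqrt (by positivity)]
    have h2 : x^2*(x^2+2*a) = y^2*(y^2+2*a) := by rw [← e1, ← e2, hxy]
    have h4 : (x^2-y^2)*(x^2+y^2+2*a) = 0 := by nlinarith
    have h5 : x^2 = y^2 := by
      rcases mul_eq_zero.mp h4 with h | h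
      · linarith
      · nlinarith
    calc x = Real.sqrt (x^2) := (Real.sqrt_sq hx0.le).symm
    _ = Real.sqrt (y^2) := by rw [h5]
    _ = y := Real.sqrt_sq hy0.le
  have key := integral_image_eq_integral_abs_deriv_smul measurableSet_Ioi hderiv hinj
    (fun x => Real.sqrt (Real.sqrt (x^2 + a^2) + a) / (Real.sqrt (x^2 + a^2) * (x^2 + b^2)))
  rw [himg] at key
  rw [key]
  apply setIntegral_congr_fun measurableSet_Ioi
  intro u hu
  have hu0 : (0:ℝ) < u := hu
  have hh : (0:ℝ) < u^2+2*a := by positivity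
  have hsp : 0 < Real.sqrt (u^2+2*a) := Real.sqrt_pos.mpr hh
  have hs2 : Real.sqrt (u^2+2*a) ^ 2 = u^2+2*a := Real.sq_sqrt hh.le
  have hD : (0:ℝ) < u^4+2*a*u^2+b^2 := by positivity
  simp only [smul_eq_mul, hφ]
  have hx2 : (u * Real.sqrt (u^2+2*a))^2 + a^2 = (u^2+a)^2 := by
    rw [mul_pow, hs2]; ring
  rw [hx2, Real.sqrt_sq (by positivity : (0:ℝ) ≤ u^2+a)]
  have hx2b : (u * Real.sqrt (u^2+2*a))^2 + b^2 = u^4+2*a*u^2+b^2 := by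
    rw [mul_pow, hs2]; ring
  rw [hx2b, show u^2+a+a = u^2+2*a by ring]
  rw [abs_of_pos (by positivity : (0:ℝ) < (2*u^2+2*a)/Real.sqrt (u^2+2*a))]
  have hsa : (0:ℝ) < u^2+a := by positivity
  field_simp

theorem stmt18 (a b : ℝ) (ha : 0 ≤ a) (hb : 0 < b) :
    ∫ x in Set.Ioi (0:ℝ),
        Real.sqrt (Real.sqrt (x^2 + a^2) + a) / (Real.sqrt (x^2 + a^2) * (x^2 + b^2))
      = π / (b * Real.sqrt (2 * (a + b))) := by
  rw [subPhi a b ha hb]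
  set c := Real.sqrt (2*(a+b)) with hc
  have hcpos : 0 < c := Real.sqrt_pos.mpr (by positivity)
  set I := ∫ u in Set.Ioi (0:ℝ), (u^4+2*a*u^2+b^2)⁻¹ with hI
  have hW := subW a b ha hb
  have hsplit : ∫ u in Set.Ioi (0:ℝ), (u^2+b) * (u^4+2*a*u^2+b^2)⁻¹
      = (∫ u in Set.Ioi (0:ℝ), u^2 * (u^4+2*a*u^2+b^2)⁻¹)
        + ∫ u in Set.Ioi (0:ℝ), b * (u^4+2*a*u^2+b^2)⁻¹ := by
    rw [← integral_add ((intD2 a b ha hb).integrableOn)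
      (((intD a b ha hb).const_mul b).integrableOn)]
    apply setIntegral_congr_fun measurableSet_Ioi
    intro u hu
    ring
  rw [subJ a b ha hb, MeasureTheory.integral_const_mul, ← hI] at hsplit
  rw [hsplit] at hW
  rw [MeasureTheory.integral_const_mul, ← hI]
  rw [eq_div_iff (by positivity : b * c ≠ 0)]
  rw [← hc, eq_div_iff (ne_of_gt hcpos)] at hW
  nlinarith [hW]
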